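/- (Claim 9) Let k ≥ 2 and n ≥ 3 be integers, let A ⊆ [k]^n be a compressed set with B_{≥1} ⊆ A, and set D = A ∩ B_0. Let y ∈ d(D) and let x ∈ [k]^n satisfy |R_0(x)| = 1 and x ≤ y in the ≤-order. If moreover there exists an index i with x_i = y_i, then x ∈ d(D). -/

import Mathlib

open Finset
open scoped Classical

/-- `R_i(x)`: the set of coordinates of `x` equal to `i`.
The ambient alphabet is `[k+1] = {0,…,k}`. -/
noncomputable def rset {k N : ℕ} (x : Fin N → Fin (k + 1)) (i : ℕ) : Finset (Fin N) :=
  Finset.univ.filter fun j => (x j : ℕ) = i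

/-- the strict binary order on finite sets of coordinates:
`X <_bin Y` iff `X ≠ Y` and `max (X Δ Y) ∈ Y`. -/
def binLT {N : ℕ} (X Y : Finset (Fin N)) : Prop :=
  ∃ m ∈ Y, m ∉ X ∧ ∀ j : Fin N, ((j ∈ X ∧ j ∉ Y) ∨ (j ∈ Y ∧ j ∉ X)) → j ≤ m

/-- the strict `≤`-order on `[k+1]^N`: `x < y` iff `|R_0(x)| > |R_0(y)|`, or
`|R_0(x)| = |R_0(y)|` and for the largest `i` with `R_i(x) ≠ R_i(y)` we have
`max (R_i(x) Δ R_i(y)) ∈ R_i(y)`. -/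
def plt {k N : ℕ} (x y : Fin N → Fin (k + 1)) : Prop :=
  (rset y 0).card < (rset x 0).card ∨
    ((rset x 0).card = (rset y 0).card ∧
      ∃ i : ℕ, binLT (rset x i) (rset y i) ∧ ∀ j : ℕ, i < j → rset x j = rset y j)

/-- the `≤`-order on `[k+1]^N`. -/
def ple {k N : ℕ} (x y : Fin N → Fin (k + 1)) : Prop := x = y ∨ plt x y

/-- `B` is an initial segment of the `≤`-order. -/
def isInitSeg {k N : ℕ} (B : Finset (Fin N → Fin (k + 1))) : Prop :=
  ∀ y ∈ B, ∀ x, ple x y → x ∈ B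

/-- the `d`-shadow: all points obtained from a point of `A` by flipping one
nonzero coordinate to `0`. -/
noncomputable def dShadow {k N : ℕ} (A : Finset (Fin N → Fin (k + 1))) :
    Finset (Fin N → Fin (k + 1)) :=
  A.biUnion fun x =>
    (Finset.univ.filter fun i => x i ≠ 0).image fun i => Function.update x i 0

/-- the initial segment of the `≤`-order on `[k+1]^N` of cardinality `m`. -/
noncomputable def initSeg (k N m : ℕ) : Finset (Fin N → Fin (k + 1)) :=
  Finset.univ.filter fun x => (Finset.univ.filter fun y => ple y x).card ≤ m

/-- the `C_s`-compression of `A ⊆ [k+1]^(n+1)`: replace each slice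
`A_{s,t} = {y : t_s y ∈ A}` by the initial segment of the same size. -/
noncomputable def compress {k n : ℕ} (s : Fin (n + 1)) (A : Finset (Fin (n + 1) → Fin (k + 1))) :
    Finset (Fin (n + 1) → Fin (k + 1)) :=
  Finset.univ.biUnion fun t : Fin (k + 1) =>
    (initSeg k n
        (Finset.univ.filter fun y : Fin n → Fin (k + 1) => s.insertNth t y ∈ A).card).image
      fun y => s.insertNth t y

/-- `A` is compressed if every `C_s`-compression fixes it. -/
def IsCompressed {k n : ℕ} (A : Finset (Fin (n + 1) → Fin (k + 1))) : Prop :=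
  ∀ s : Fin (n + 1), compress s A = A

/-- `B_r`: points with exactly `r` zero coordinates. -/
noncomputable def Bexact (k N r : ℕ) : Finset (Fin N → Fin (k + 1)) :=
  Finset.univ.filter fun x => (rset x 0).card = r

/-- `B_{≥r}`: points with at least `r` zero coordinates. -/
noncomputable def Bge (k N r : ℕ) : Finset (Fin N → Fin (k + 1)) :=
  Finset.univ.filter fun x => r ≤ (rset x 0).card

/-- `m(x)`: the largest coordinate value of `x`. -/
noncomputable def mval {k N : ℕ} (x : Fin N → Fin (k + 1)) : ℕ :=
  Finset.univ.sup fun i => (x i : ℕ)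

/-- the class `C_X`: points with maximal coordinate `s`, attained exactly on `X`,
and exactly `r` zero coordinates. -/
noncomputable def classSet (k N s r : ℕ) (X : Finset (Fin N)) : Finset (Fin N → Fin (k + 1)) :=
  Finset.univ.filter fun x => mval x = s ∧ rset x s = X ∧ (rset x 0).card = r

/-- `[m]^N = {0,…,m−1}^N`. -/
noncomputable def box (k N m : ℕ) : Finset (Fin N → Fin (k + 1)) :=
  Finset.univ.filter fun x => ∀ i, (x i : ℕ) < m

/-- `{1,…,s−1}^N`. -/
noncomputable def box1 (k N s : ℕ) : Finset (Fin N → Fin (k + 1)) :=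
  Finset.univ.filter fun x => ∀ i, 1 ≤ (x i : ℕ) ∧ (x i : ℕ) ≤ s - 1

/-- `B` is a down-set. -/
def isDownSet {k N : ℕ} (B : Finset (Fin N → Fin (k + 1))) : Prop :=
  ∀ y ∈ B, ∀ x : Fin N → Fin (k + 1), (∀ j, (x j : ℕ) ≤ (y j : ℕ)) → x ∈ B


/-!
Write `y = z[p ↦ 0]` with `z ∈ D` zero-free, and let `q` be the unique zero of `x`. We raise
`x_q` to a nonzero value `v` so that `w = x[q ↦ v]` satisfies `w ≤ z` and `w_i = z_i`: take
`v = z_p` if `p = q`, and `v = 1` otherwise (then `w ≤ y[p ↦ 1] ≤ z`). Since `A` is compressed,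
its slice through `z` in direction `i` is an initial segment, so `w ∈ A`; as `w` is zero-free,
`x = w[q ↦ 0] ∈ d(D)`.

The comparisons rest on two facts: `R_j`-sets are compared in colex order, and the `≤`-order
ignores a coordinate on which both points agree.
-/

open Function

section Levels

variable {k N : ℕ}

@[simp] lemma mem_rset {x : Fin N → Fin (k + 1)} {j : ℕ} {a : Fin N} :
    a ∈ rset x j ↔ (x a : ℕ) = j := by
  simp [rset]

lemma rset_update_of_eq {x : Fin N → Fin (k + 1)} {a : Fin N} {c : Fin (k + 1)} {j : ℕ}
    (hc : (c : ℕ) = j) : rset (update x a c) j = insert a (rset x j) := by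
  ext b
  by_cases hb : b = a <;> simp [hb, hc]

lemma rset_update_of_ne {x : Fin N → Fin (k + 1)} {a : Fin N} {c : Fin (k + 1)} {j : ℕ}
    (hc : (c : ℕ) ≠ j) : rset (update x a c) j = (rset x j).erase a := by
  ext b
  by_cases hb : b = a <;> simp [hb, hc]

lemma rset_update_of_ne_of_ne {x : Fin N → Fin (k + 1)} {a : Fin N} {c : Fin (k + 1)} {j : ℕ}
    (hc : (c : ℕ) ≠ j) (ha : (x a : ℕ) ≠ j) : rset (update x a c) j = rset x j := by
  rw [rset_update_of_ne hc, erase_eq_of_notMem (by simpa using ha)]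

lemma val_eq_iff_of_rset_eq_singleton {x : Fin N → Fin (k + 1)} {q : Fin N} {j : ℕ}
    (h : rset x j = {q}) (a : Fin N) : (x a : ℕ) = j ↔ a = q := by
  rw [← mem_rset, h, mem_singleton]

lemma mem_dShadow {x : Fin N → Fin (k + 1)} {D : Finset (Fin N → Fin (k + 1))} :
    x ∈ dShadow D ↔ ∃ w ∈ D, ∃ a, w a ≠ 0 ∧ update w a 0 = x := by
  simp [dShadow]

lemma binLT_iff_toColex_lt {X Y : Finset (Fin N)} : binLT X Y ↔ toColex X < toColex Y := by
  simp only [Colex.toColex_lt_toColex_iff_max'_mem, binLT, ← mem_symmDiff]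
  constructor
  · rintro ⟨m, hmY, hmX, hmax⟩
    have hne : X ≠ Y := fun h => hmX (h ▸ hmY)
    have hm : (symmDiff X Y).max' (symmDiff_nonempty.2 hne) = m :=
      le_antisymm (max'_le _ _ _ hmax)
        (le_max' _ _ (mem_symmDiff.2 (Or.inr ⟨hmY, hmX⟩)))
    exact ⟨hne, hm ▸ hmY⟩
  · rintro ⟨hne, hmY⟩
    refine ⟨_, hmY, fun hmX => ?_, fun j hj => le_max' _ _ hj⟩
    rcases mem_symmDiff.1 (max'_mem _ (symmDiff_nonempty.2 hne)) with h | h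
    exacts [h.2 hmY, h.2 hmX]

lemma binLT.trans {X Y Z : Finset (Fin N)} (h₁ : binLT X Y) (h₂ : binLT Y Z) : binLT X Z := by
  rw [binLT_iff_toColex_lt] at *
  exact h₁.trans h₂

lemma erase_eq_erase_iff_of_mem_iff {X Y : Finset (Fin N)} {a : Fin N} (h : a ∈ X ↔ a ∈ Y) :
    X.erase a = Y.erase a ↔ X = Y := by
  refine ⟨fun he => ?_, fun he => he ▸ rfl⟩
  by_cases ha : a ∈ X
  · rw [← insert_erase ha, ← insert_erase (h.1 ha), he]
  · rwa [erase_eq_of_notMem ha, erase_eq_of_notMem (h.not.1 ha)] at he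

lemma binLT_erase_erase_iff {X Y : Finset (Fin N)} {a : Fin N} (h : a ∈ X ↔ a ∈ Y) :
    binLT (X.erase a) (Y.erase a) ↔ binLT X Y := by
  by_cases ha : a ∈ X
  · simp only [binLT_iff_toColex_lt, ← sdiff_singleton_eq_erase]
    exact Colex.toColex_sdiff_lt_toColex_sdiff (by simpa using ha) (by simpa using h.1 ha)
  · rw [erase_eq_of_notMem ha, erase_eq_of_notMem (h.not.1 ha)]

end Levels

section Slices

variable {k n : ℕ} {x y : Fin (n + 1) → Fin (k + 1)} {i : Fin (n + 1)}

lemma image_rset_removeNth (x : Fin (n + 1) → Fin (k + 1)) (i : Fin (n + 1)) (j : ℕ) :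
    (rset (i.removeNth x) j).image i.succAbove = (rset x j).erase i := by
  ext b
  simp only [mem_image, mem_rset, mem_erase, Fin.removeNth_apply]
  constructor
  · rintro ⟨a, ha, rfl⟩
    exact ⟨Fin.succAbove_ne i a, ha⟩
  · rintro ⟨hbi, hb⟩
    obtain ⟨a, rfl⟩ := Fin.exists_succAbove_eq hbi
    exact ⟨a, hb, rfl⟩

lemma card_rset_removeNth (x : Fin (n + 1) → Fin (k + 1)) (i : Fin (n + 1)) (j : ℕ) :
    (rset (i.removeNth x) j).card + (if (x i : ℕ) = j then 1 else 0) = (rset x j).card := by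
  rw [← card_image_of_injective _ (Fin.succAbove_right_injective (p := i)),
    image_rset_removeNth]
  split_ifs with h
  · exact card_erase_add_one (by simpa using h)
  · rw [erase_eq_of_notMem (by simpa using h), add_zero]

lemma rset_removeNth_eq_iff (hi : x i = y i) (j : ℕ) :
    rset (i.removeNth x) j = rset (i.removeNth y) j ↔ rset x j = rset y j := by
  rw [← (image_injective (Fin.succAbove_right_injective (p := i))).eq_iff,
    image_rset_removeNth, image_rset_removeNth, erase_eq_erase_iff_of_mem_iff (by simp [hi])]

lemma binLT_rset_removeNth_iff (hi : x i = y i) (j : ℕ) :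
    binLT (rset (i.removeNth x) j) (rset (i.removeNth y) j) ↔ binLT (rset x j) (rset y j) := by
  rw [binLT_iff_toColex_lt, ← Colex.toColex_image_lt_toColex_image (Fin.strictMono_succAbove i),
    image_rset_removeNth, image_rset_removeNth, ← binLT_iff_toColex_lt,
    binLT_erase_erase_iff (by simp [hi])]

lemma plt_removeNth_iff (hi : x i = y i) :
    plt (i.removeNth x) (i.removeNth y) ↔ plt x y := by
  have hx := card_rset_removeNth x i 0
  have hy := card_rset_removeNth y i 0
  rw [hi] at hx
  have hlt : (rset (i.removeNth y) 0).card < (rset (i.removeNth x) 0).card ↔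
      (rset y 0).card < (rset x 0).card := by omega
  have heq : (rset (i.removeNth x) 0).card = (rset (i.removeNth y) 0).card ↔
      (rset x 0).card = (rset y 0).card := by omega
  simp only [plt, hlt, heq, binLT_rset_removeNth_iff hi, rset_removeNth_eq_iff hi]

lemma ple_removeNth_iff (hi : x i = y i) :
    ple (i.removeNth x) (i.removeNth y) ↔ ple x y := by
  refine or_congr ⟨fun h => ?_, fun h => h ▸ rfl⟩ (plt_removeNth_iff hi)
  rw [← Fin.insertNth_self_removeNth i x, ← Fin.insertNth_self_removeNth i y, h, hi]

end Slices

section Order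

variable {k N : ℕ} {x y z : Fin N → Fin (k + 1)}

lemma plt.trans (h₁ : plt x y) (h₂ : plt y z) : plt x z := by
  rcases h₁ with h₁ | ⟨hc₁, i₁, hb₁, he₁⟩ <;> rcases h₂ with h₂ | ⟨hc₂, i₂, hb₂, he₂⟩
  · exact Or.inl (h₂.trans h₁)
  · exact Or.inl (hc₂ ▸ h₁)
  · exact Or.inl (hc₁ ▸ h₂)
  refine Or.inr ⟨hc₁.trans hc₂, ?_⟩
  rcases lt_trichotomy i₁ i₂ with hlt | rfl | hgt
  · exact ⟨i₂, he₁ i₂ hlt ▸ hb₂, fun j hj => (he₁ j (hlt.trans hj)).trans (he₂ j hj)⟩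
  · exact ⟨i₁, hb₁.trans hb₂, fun j hj => (he₁ j hj).trans (he₂ j hj)⟩
  · exact ⟨i₁, (he₂ i₁ hgt).symm ▸ hb₁, fun j hj => (he₁ j hj).trans (he₂ j (hgt.trans hj))⟩

lemma ple.trans (h₁ : ple x y) (h₂ : ple y z) : ple x z := by
  rcases h₁ with rfl | h₁
  · exact h₂
  rcases h₂ with rfl | h₂
  · exact Or.inr h₁
  · exact Or.inr (h₁.trans h₂)

lemma plt_update_of_lt {a : Fin N} {c : Fin (k + 1)} (h : (x a : ℕ) < c) :
    plt x (update x a c) := by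
  have hc0 : (c : ℕ) ≠ 0 := by omega
  by_cases hxa : (x a : ℕ) = 0
  · left
    rw [rset_update_of_ne hc0]
    exact card_erase_lt_of_mem (by simpa using hxa)
  · refine Or.inr ⟨by rw [rset_update_of_ne_of_ne hc0 hxa], c, ?_, fun j hj => ?_⟩
    · rw [rset_update_of_eq rfl, binLT_iff_toColex_lt]
      refine Colex.toColex_lt_toColex_of_ssubset (ssubset_insert ?_)
      simp only [mem_rset]
      omega
    · rw [rset_update_of_ne_of_ne (by omega) (by omega)]

lemma ple_update_of_le {a : Fin N} {c : Fin (k + 1)} (h : (x a : ℕ) ≤ c) :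
    ple x (update x a c) := by
  rcases h.lt_or_eq with h | h
  · exact Or.inr (plt_update_of_lt h)
  · left
    rw [← Fin.ext h, update_eq_self]

/-- Above the top level `m` at which `x` and `y` differ nothing changes; if `m = 1` the two
raised points coincide. -/
lemma ple_update_update_of_plt {p q : Fin N} {v : Fin (k + 1)} (hx : rset x 0 = {q})
    (hy : rset y 0 = {p}) (hpq : p ≠ q) (hv : (v : ℕ) = 1) (h : plt x y) :
    ple (update x q v) (update y p v) := by
  have hx0 := val_eq_iff_of_rset_eq_singleton hx
  have hy0 := val_eq_iff_of_rset_eq_singleton hy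
  obtain ⟨-, m, hm, habove⟩ := h.resolve_left (by simp [hx, hy])
  have agree : ∀ a, m < (x a : ℕ) ∨ m < (y a : ℕ) → (x a : ℕ) = y a := by
    rintro a (ha | ha)
    · have h' : a ∈ rset y (x a) := habove _ ha ▸ mem_rset.2 rfl
      exact (mem_rset.1 h').symm
    · have h' : a ∈ rset x (y a) := (habove _ ha).symm ▸ mem_rset.2 rfl
      exact mem_rset.1 h'
  have hxq : (x q : ℕ) = 0 := (hx0 q).2 rfl
  have hyp : (y p : ℕ) = 0 := (hy0 p).2 rfl
  have hm0 : m ≠ 0 := by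
    rintro rfl
    have hyq : (y q : ℕ) ≠ 0 := (hy0 q).not.2 hpq.symm
    have := agree q (Or.inr (Nat.pos_of_ne_zero hyq))
    omega
  rcases (show m = 1 ∨ 2 ≤ m by omega) with rfl | hm2
  · left
    funext a
    apply Fin.ext
    have := agree a
    rcases eq_or_ne a q with rfl | haq
    · have : (y a : ℕ) ≠ 0 := (hy0 a).not.2 hpq.symm
      rw [update_self, update_of_ne hpq.symm]
      omega
    rcases eq_or_ne a p with rfl | hap
    · have : (x a : ℕ) ≠ 0 := (hx0 a).not.2 hpq
      rw [update_self, update_of_ne hpq]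
      omega
    · have : (x a : ℕ) ≠ 0 := (hx0 a).not.2 haq
      have : (y a : ℕ) ≠ 0 := (hy0 a).not.2 hap
      rw [update_of_ne haq, update_of_ne hap]
      omega
  · have level : ∀ j, 2 ≤ j →
        rset (update x q v) j = rset x j ∧ rset (update y p v) j = rset y j :=
      fun j hj => ⟨rset_update_of_ne_of_ne (by omega) (by omega),
        rset_update_of_ne_of_ne (by omega) (by omega)⟩
    refine Or.inr (Or.inr ⟨?_, m, ?_, fun j hj => ?_⟩)
    · simp [rset_update_of_ne (show (v : ℕ) ≠ 0 by omega), hx, hy]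
    · rwa [(level m hm2).1, (level m hm2).2]
    · rw [(level j (by omega)).1, (level j (by omega)).2, habove j hj]

end Order

section Compression

variable {k n : ℕ} {x y : Fin (n + 1) → Fin (k + 1)}

lemma plt_update_update {p : Fin (n + 1)} (h : plt x y) (hp : x p = y p) (c : Fin (k + 1)) :
    plt (update x p c) (update y p c) := by
  rwa [← plt_removeNth_iff (i := p) (by simp), Fin.removeNth_update, Fin.removeNth_update,
    plt_removeNth_iff hp]

/-- Every slice of a compressed set is an initial segment. -/
lemma IsCompressed.mem_of_ple {A : Finset (Fin (n + 1) → Fin (k + 1))} (hA : IsCompressed A)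
    {i : Fin (n + 1)} (hy : y ∈ A) (h : ple x y) (hi : x i = y i) : x ∈ A := by
  rw [← hA i] at hy ⊢
  simp only [compress, mem_biUnion, mem_univ, true_and, mem_image] at hy ⊢
  obtain ⟨t, y', hy', rfl⟩ := hy
  have hxy' : ple (i.removeNth x) y' := by
    simpa using (ple_removeNth_iff hi).2 h
  rw [Fin.insertNth_apply_same] at hi
  refine ⟨t, i.removeNth x, ?_, by rw [← hi, Fin.insertNth_self_removeNth]⟩
  simp only [initSeg, mem_filter, mem_univ, true_and] at hy' ⊢
  refine le_trans (card_le_card fun v hv => ?_) hy'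
  simp only [mem_filter, mem_univ, true_and] at hv ⊢
  exact hv.trans hxy'

lemma exists_update_ple_of_plt (hk : 1 ≤ k) {x z : Fin (n + 1) → Fin (k + 1)}
    {p q i : Fin (n + 1)} (hz : rset z 0 = ∅) (hx : rset x 0 = {q})
    (h : plt x (update z p 0)) (hi : x i = update z p 0 i) :
    ∃ v : Fin (k + 1), v ≠ 0 ∧ update x q v i = z i ∧ ple (update x q v) z := by
  have hz0 : ∀ a, (z a : ℕ) ≠ 0 := fun a ha => by
    simpa [hz] using (mem_rset.2 ha : a ∈ rset z 0)
  have hy : rset (update z p 0) 0 = {p} := by simp [rset_update_of_eq (Fin.val_zero (k + 1)), hz]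
  have hx0 := val_eq_iff_of_rset_eq_singleton hx
  by_cases hpq : p = q
  · subst hpq
    refine ⟨z p, fun h0 => hz0 p (by simp [h0]), ?_, ?_⟩
    · by_cases hip : i = p
      · simp [hip]
      · rw [update_of_ne hip, hi, update_of_ne hip]
    · have hxy : x p = update z p 0 p := Fin.ext (by simp [(hx0 p).2 rfl])
      have hz' : update (update z p 0) p (z p) = z := by simp
      have hlt := plt_update_update h hxy (z p)
      rw [hz'] at hlt
      exact Or.inr hlt
  · have hiq : i ≠ q := by
      rintro rfl
      have hxi : (x i : ℕ) = 0 := (hx0 i).2 rfl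
      rw [hi, update_of_ne (Ne.symm hpq)] at hxi
      exact hz0 i hxi
    have hip : i ≠ p := by
      rintro rfl
      exact hpq ((hx0 i).1 (by simp [hi]))
    let one : Fin (k + 1) := ⟨1, by omega⟩
    refine ⟨one, fun h1 => by simp [one, Fin.ext_iff] at h1,
      by rw [update_of_ne hiq, hi, update_of_ne hip], ?_⟩
    refine (ple_update_update_of_plt hx hy hpq rfl h).trans ?_
    have hz' : update (update (update z p 0) p one) p (z p) = z := by simp
    conv_rhs => rw [← hz']
    refine ple_update_of_le ?_
    simpa [one] using Nat.one_le_iff_ne_zero.2 (hz0 p)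

end Compression

theorem claim9_general (k n : ℕ) (hk : 1 ≤ k)
    (A : Finset (Fin (n + 1) → Fin (k + 1))) (hA : IsCompressed A)
    (y : Fin (n + 1) → Fin (k + 1)) (hy : y ∈ dShadow (A ∩ Bexact k (n + 1) 0))
    (x : Fin (n + 1) → Fin (k + 1)) (hx0 : (rset x 0).card = 1) (hxy : ple x y)
    (i : Fin (n + 1)) (hi : x i = y i) :
    x ∈ dShadow (A ∩ Bexact k (n + 1) 0) := by
  obtain ⟨z, hzD, p, -, rfl⟩ := mem_dShadow.1 hy
  obtain ⟨hzA, hzB⟩ := mem_inter.1 hzD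
  rcases hxy with rfl | hlt
  · exact hy
  obtain ⟨q, hq⟩ := card_eq_one.1 hx0
  have hz : rset z 0 = ∅ := card_eq_zero.1 (by simpa [Bexact] using hzB)
  obtain ⟨v, hv, hvi, hvz⟩ := exists_update_ple_of_plt hk hz hq hlt hi
  have hxq : x q = 0 := Fin.ext ((val_eq_iff_of_rset_eq_singleton hq q).2 rfl)
  have hwB : update x q v ∈ Bexact k (n + 1) 0 := by
    simp [Bexact, rset_update_of_ne (Fin.val_ne_zero_iff.2 hv), hq]
  refine mem_dShadow.2
    ⟨update x q v, mem_inter.2 ⟨hA.mem_of_ple hzA hvz hvi, hwB⟩, q, by simpa, ?_⟩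
  rw [update_idem, ← hxq, update_eq_self]

/-- **Claim 9.** Let `k ≥ 2`, `n ≥ 3`, let `A ⊆ [k]^n` be compressed with `B_{≥1} ⊆ A`
and set `D = A ∩ B_0`. If `y ∈ d(D)`, `x` satisfies `|R_0(x)| = 1` and `x ≤ y`, and
`x_i = y_i` for some index `i`, then `x ∈ d(D)`.
(Dimension `n ≥ 3` is rendered as `n + 1` with `n ≥ 2`; alphabet `[k]` with `k ≥ 2`
as `Fin (k+1)` with `k ≥ 1`.) -/
theorem claim9 (k n : ℕ) (hk : 1 ≤ k) (hn : 2 ≤ n)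
    (A : Finset (Fin (n + 1) → Fin (k + 1))) (hA : IsCompressed A)
    (hB1 : Bge k (n + 1) 1 ⊆ A)
    (y : Fin (n + 1) → Fin (k + 1)) (hy : y ∈ dShadow (A ∩ Bexact k (n + 1) 0))
    (x : Fin (n + 1) → Fin (k + 1)) (hx0 : (rset x 0).card = 1) (hxy : ple x y)
    (i : Fin (n + 1)) (hi : x i = y i) :
    x ∈ dShadow (A ∩ Bexact k (n + 1) 0) :=
  claim9_general k n hk A hA y hy x hx0 hxy i hi
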